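/- arXiv:2306.06821 — 2 statements merged into one kernel-verified Lean document; each statement's English description precedes it below -/
import Mathlib

section
/- (Proposition 4) Let P be a normal logic program over n atoms with m rules and (D, Q) its matricized form, let C be a set of k constraints with constraint matrix Q_c, and fix ℓ₂ > 0 and ℓ₃ > 0. For u ∈ ℝ^n define J_SU(u) = 0.5·(‖u − min₁(d)‖₂² + ℓ₂·‖u ⊙ (1 − u)‖₂²) with d = D(1 − min₁(Q(1 − u^δ))), J_c(u) = Σ_{c ∈ Fin k} (1 − min₁((Q_c(1 − u^δ))(c))), and J_{SU+c}(u) = J_SU(u) + ℓ₃·J_c(u). Then J_{SU+c}(u) = 0 if and only if u ∈ {0,1}^n and the model I = {i | u(i) = 1} is a supported model of P satisfying every constraint of C. -/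
open Finset Matrix

noncomputable section

/-- componentwise `x ↦ min x 1` -/
def min1 {k : Type*} (v : k → ℝ) : k → ℝ := fun j => min (v j) 1

/-- the vectorized model `u_I ∈ {0,1}^n` of a model `I` -/
def vecI {n : ℕ} (I : Finset (Fin n)) : Fin n → ℝ := fun i => if i ∈ I then 1 else 0

/-- the dualized vector `u^δ = [u ; 1-u] ∈ ℝ^{2n}` -/
def dvec {n : ℕ} (u : Fin n → ℝ) : Fin n ⊕ Fin n → ℝ := Sum.elim u fun i => 1 - u i

/-- the matrix `D ∈ ℝ^{n×m}` of the matricized program: `D(i,j) = 1` iff `h j = i` -/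
def Dmat {n m : ℕ} (hd : Fin m → Fin n) : Matrix (Fin n) (Fin m) ℝ :=
  Matrix.of fun i j => if hd j = i then 1 else 0

/-- the matrix `Q = [Q¹ Q²] ∈ ℝ^{m×2n}` of the matricized program -/
def Qmat {n m : ℕ} (pos neg : Fin m → Finset (Fin n)) :
    Matrix (Fin m) (Fin n ⊕ Fin n) ℝ :=
  Matrix.of fun j => Sum.elim (fun i => if i ∈ pos j then (1 : ℝ) else 0)
    (fun i => if i ∈ neg j then (1 : ℝ) else 0)

/-- a half of the matrix `Q`: `Qhalf pos = Q¹`, `Qhalf neg = Q²` -/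
def Qhalf {n m : ℕ} (b : Fin m → Finset (Fin n)) : Matrix (Fin m) (Fin n) ℝ :=
  Matrix.of fun j i => if i ∈ b j then 1 else 0

/-- `I` satisfies the body of rule `j` -/
def bodyTrue {n m : ℕ} (pos neg : Fin m → Finset (Fin n)) (I : Finset (Fin n))
    (j : Fin m) : Prop :=
  pos j ⊆ I ∧ neg j ∩ I = ∅

instance {n m : ℕ} (pos neg : Fin m → Finset (Fin n)) (I : Finset (Fin n)) :
    DecidablePred (bodyTrue pos neg I) := fun j =>
  inferInstanceAs (Decidable (pos j ⊆ I ∧ neg j ∩ I = ∅))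

/-- `I` is a supported model of the program -/
def isSupported {n m : ℕ} (hd : Fin m → Fin n) (pos neg : Fin m → Finset (Fin n))
    (I : Finset (Fin n)) : Prop :=
  ∀ i, i ∈ I ↔ ∃ j, hd j = i ∧ bodyTrue pos neg I j

/-- the Euclidean norm `‖·‖₂` on `ℝ^k` -/
def euclidNorm {k : Type*} [Fintype k] (v : k → ℝ) : ℝ := Real.sqrt (∑ i, v i ^ 2)

/-- the vector `d = D(1 - min₁(Q(1 - u^δ)))` -/
def dvecOf {n m : ℕ} (hd : Fin m → Fin n) (pos neg : Fin m → Finset (Fin n))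
    (u : Fin n → ℝ) : Fin n → ℝ :=
  (Dmat hd).mulVec fun j => 1 - min1 ((Qmat pos neg).mulVec fun x => 1 - dvec u x) j

/-- the cost function `J_SU` -/
def JSU {n m : ℕ} (hd : Fin m → Fin n) (pos neg : Fin m → Finset (Fin n)) (ℓ₂ : ℝ)
    (u : Fin n → ℝ) : ℝ :=
  0.5 * (euclidNorm (fun i => u i - min1 (dvecOf hd pos neg u) i) ^ 2
    + ℓ₂ * euclidNorm (fun i => u i * (1 - u i)) ^ 2)

/-- the constraint cost `J_c(u) = Σ_c (1 - min₁((Q_c(1 - u^δ))(c)))` -/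
def Jc {n k : ℕ} (cpos cneg : Fin k → Finset (Fin n)) (u : Fin n → ℝ) : ℝ :=
  ∑ c, (1 - min1 ((Qmat cpos cneg).mulVec fun x => 1 - dvec u x) c)

lemma euclid_sq {k : Type*} [Fintype k] (v : k → ℝ) : euclidNorm v ^ 2 = ∑ i, v i ^ 2 :=
  Real.sq_sqrt (Finset.sum_nonneg fun i _ => sq_nonneg _)

lemma qval_eq {n m : ℕ} (pos neg : Fin m → Finset (Fin n)) (u : Fin n → ℝ) (j : Fin m) :
    ((Qmat pos neg).mulVec fun x => 1 - dvec u x) j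
      = (∑ i ∈ pos j, (1 - u i)) + ∑ i ∈ neg j, u i := by
  simp [Matrix.mulVec, dotProduct, Qmat, dvec, Fintype.sum_sum_type,
    ite_mul, Finset.sum_ite_mem]

section bin
variable {n m : ℕ} (pos neg : Fin m → Finset (Fin n)) {u : Fin n → ℝ}
  (hb : ∀ i, u i = 0 ∨ u i = 1)

lemma mem_I {i : Fin n} : i ∈ (Finset.univ.filter fun i => u i = 1) ↔ u i = 1 := by simp

include hb

lemma qval_of_body (j : Fin m)
    (h : bodyTrue pos neg (Finset.univ.filter fun i => u i = 1) j) :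
    ((Qmat pos neg).mulVec fun x => 1 - dvec u x) j = 0 := by
  rw [qval_eq]
  have h1 : ∀ i ∈ pos j, (1 : ℝ) - u i = 0 := fun i hi => by
    have := (mem_I (i := i)).1 (h.1 hi); linarith
  have h2 : ∀ i ∈ neg j, u i = 0 := fun i hi => by
    rcases hb i with h0 | h0
    · exact h0
    · exact absurd (Finset.mem_inter.2 ⟨hi, mem_I.2 h0⟩)
        (by rw [h.2]; exact Finset.notMem_empty i)
  rw [Finset.sum_eq_zero h1, Finset.sum_eq_zero h2, add_zero]

lemma qval_of_not_body (j : Fin m)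
    (h : ¬ bodyTrue pos neg (Finset.univ.filter fun i => u i = 1) j) :
    1 ≤ ((Qmat pos neg).mulVec fun x => 1 - dvec u x) j := by
  rw [qval_eq]
  have hpn : ∀ i ∈ pos j, (0:ℝ) ≤ 1 - u i := fun i _ => by rcases hb i with h0|h0 <;> rw [h0] <;> norm_num
  have hnn : ∀ i ∈ neg j, (0:ℝ) ≤ u i := fun i _ => by rcases hb i with h0|h0 <;> rw [h0] <;> norm_num
  rw [bodyTrue, not_and_or] at h
  rcases h with h | h
  · obtain ⟨i, hi, hni⟩ := Finset.not_subset.1 h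
    have : u i = 0 := by rcases hb i with h0|h0; exact h0; exact absurd (mem_I.2 h0) hni
    have h1 : (1:ℝ) ≤ ∑ i ∈ pos j, (1 - u i) := by
      have hle := Finset.single_le_sum hpn hi
      rw [this] at hle; linarith
    have h2 : (0:ℝ) ≤ ∑ i ∈ neg j, u i := Finset.sum_nonneg hnn
    linarith
  · obtain ⟨i, hi⟩ := Finset.nonempty_iff_ne_empty.2 h
    rw [Finset.mem_inter] at hi
    have hu : u i = 1 := mem_I.1 hi.2
    have h2 : (1:ℝ) ≤ ∑ i ∈ neg j, u i := by
      have := Finset.single_le_sum hnn hi.1; linarith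
    have h1 : (0:ℝ) ≤ ∑ i ∈ pos j, (1 - u i) := Finset.sum_nonneg hpn
    linarith

lemma ind_eq (j : Fin m) :
    1 - min1 ((Qmat pos neg).mulVec fun x => 1 - dvec u x) j
      = if bodyTrue pos neg (Finset.univ.filter fun i => u i = 1) j then 1 else 0 := by
  by_cases h : bodyTrue pos neg (Finset.univ.filter fun i => u i = 1) j
  · rw [if_pos h, min1, qval_of_body pos neg hb j h]; norm_num
  · rw [if_neg h, min1, min_eq_right (qval_of_not_body pos neg hb j h)]; ring

lemma mind_eq (hd : Fin m → Fin n) (i : Fin n) :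
    min1 (dvecOf hd pos neg u) i
      = if ∃ j, hd j = i ∧ bodyTrue pos neg (Finset.univ.filter fun i => u i = 1) j
        then 1 else 0 := by
  set I := Finset.univ.filter fun i => u i = 1 with hI
  have hdv : dvecOf hd pos neg u i
      = ∑ j, (if hd j = i ∧ bodyTrue pos neg I j then (1:ℝ) else 0) := by
    rw [dvecOf, Matrix.mulVec]
    refine Finset.sum_congr rfl fun j _ => ?_
    simp only [Dmat, Matrix.of_apply, ind_eq pos neg hb j, ← hI]
    by_cases h1 : hd j = i <;> by_cases h2 : bodyTrue pos neg I j <;> simp [h1, h2]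
  by_cases h : ∃ j, hd j = i ∧ bodyTrue pos neg I j
  · rw [if_pos h, min1, min_eq_right]
    obtain ⟨j, hj⟩ := h
    rw [hdv]
    have := Finset.single_le_sum (f := fun j => if hd j = i ∧ bodyTrue pos neg I j then (1:ℝ) else 0)
      (fun j _ => by positivity) (Finset.mem_univ j)
    simpa [hj.1, hj.2] using this
  · rw [if_neg h, min1, hdv, Finset.sum_eq_zero fun j _ => ?_]
    · norm_num
    · rw [if_neg fun hj => h ⟨j, hj⟩]
end bin

section mainproof
variable {n m k : ℕ}

theorem stmt7' (hd : Fin m → Fin n) (pos neg : Fin m → Finset (Fin n))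
    (cpos cneg : Fin k → Finset (Fin n)) (ℓ₂ ℓ₃ : ℝ) (hℓ₂ : 0 < ℓ₂) (hℓ₃ : 0 < ℓ₃)
    (u : Fin n → ℝ) :
    JSU hd pos neg ℓ₂ u + ℓ₃ * Jc cpos cneg u = 0 ↔
      (∀ i, u i = 0 ∨ u i = 1) ∧
        isSupported hd pos neg (Finset.univ.filter fun i => u i = 1) ∧
        ∀ c, ¬ bodyTrue cpos cneg (Finset.univ.filter fun i => u i = 1) c := by
  set I := Finset.univ.filter fun i => u i = 1 with hI
  set A := euclidNorm (fun i => u i - min1 (dvecOf hd pos neg u) i) ^ 2 with hA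
  set B := euclidNorm (fun i => u i * (1 - u i)) ^ 2 with hB
  have hA0 : 0 ≤ A := sq_nonneg _
  have hB0 : 0 ≤ B := sq_nonneg _
  have hJcterm : ∀ c : Fin k, 0 ≤ 1 - min1 ((Qmat cpos cneg).mulVec fun x => 1 - dvec u x) c :=
    fun c => sub_nonneg.2 (min_le_right _ _)
  have hJc0 : 0 ≤ Jc cpos cneg u := Finset.sum_nonneg fun c _ => hJcterm c
  have hJSUeq : JSU hd pos neg ℓ₂ u = 0.5 * (A + ℓ₂ * B) := rfl
  have hJSU0 : 0 ≤ JSU hd pos neg ℓ₂ u := by rw [hJSUeq]; nlinarith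
  constructor
  · intro h0
    have hJSUz : JSU hd pos neg ℓ₂ u = 0 := by nlinarith
    have hJcz : Jc cpos cneg u = 0 := by nlinarith
    rw [hJSUeq] at hJSUz
    have hAz : A = 0 := by nlinarith
    have hBz : B = 0 := by nlinarith
    have hb : ∀ i, u i = 0 ∨ u i = 1 := by
      intro i
      rw [hB, euclid_sq] at hBz
      have := (Finset.sum_eq_zero_iff_of_nonneg (fun i _ => sq_nonneg _)).1 hBz i
        (Finset.mem_univ i)
      have := pow_eq_zero_iff (n := 2) (by norm_num) |>.1 this
      rcases mul_eq_zero.1 this with h | h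
      · exact Or.inl h
      · exact Or.inr (by linarith)
    have humin : ∀ i, u i = min1 (dvecOf hd pos neg u) i := by
      intro i
      rw [hA, euclid_sq] at hAz
      have := (Finset.sum_eq_zero_iff_of_nonneg (fun i _ => sq_nonneg _)).1 hAz i
        (Finset.mem_univ i)
      have := pow_eq_zero_iff (n := 2) (by norm_num) |>.1 this
      linarith
    refine ⟨hb, ?_, ?_⟩
    · intro i
      rw [mem_I, humin i, mind_eq pos neg hb hd i]
      by_cases h : ∃ j, hd j = i ∧ bodyTrue pos neg I j
      · simp [hI, h]
      · simp [hI, h]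
    · intro c hc
      have := (Finset.sum_eq_zero_iff_of_nonneg (fun c _ => hJcterm c)).1 hJcz c
        (Finset.mem_univ c)
      rw [ind_eq cpos cneg hb c, ← hI, if_pos hc] at this
      norm_num at this
  · rintro ⟨hb, hsup, hcon⟩
    have humin : ∀ i, u i = min1 (dvecOf hd pos neg u) i := by
      intro i
      rw [mind_eq pos neg hb hd i]
      by_cases h : ∃ j, hd j = i ∧ bodyTrue pos neg I j
      · rw [if_pos h]; exact mem_I.1 ((hsup i).2 h)
      · rw [if_neg h]
        rcases hb i with h0 | h0
        · exact h0
        · exact absurd ((hsup i).1 (mem_I.2 h0)) h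
    have hAz : A = 0 := by
      rw [hA, euclid_sq]
      exact Finset.sum_eq_zero fun i _ => by rw [humin i]; ring
    have hBz : B = 0 := by
      rw [hB, euclid_sq]
      exact Finset.sum_eq_zero fun i _ => by rcases hb i with h0 | h0 <;> rw [h0] <;> ring
    have hJcz : Jc cpos cneg u = 0 :=
      Finset.sum_eq_zero fun c _ => by
        rw [ind_eq cpos cneg hb c, ← hI, if_neg (hcon c)]
    rw [hJSUeq, hAz, hBz, hJcz]; ring

end mainproof

/-- Proposition 4: for `ℓ₂, ℓ₃ > 0`, `J_{SU+c}(u) = J_SU(u) + ℓ₃·J_c(u) = 0`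
iff `u ∈ {0,1}^n` and `I = {i | u(i) = 1}` is a supported model of `P` satisfying every
constraint of `C`. -/
theorem stmt7 {n m k : ℕ} (hd : Fin m → Fin n) (pos neg : Fin m → Finset (Fin n))
    (cpos cneg : Fin k → Finset (Fin n)) (ℓ₂ ℓ₃ : ℝ) (hℓ₂ : 0 < ℓ₂) (hℓ₃ : 0 < ℓ₃)
    (u : Fin n → ℝ) :
    JSU hd pos neg ℓ₂ u + ℓ₃ * Jc cpos cneg u = 0 ↔
      (∀ i, u i = 0 ∨ u i = 1) ∧
        isSupported hd pos neg (Finset.univ.filter fun i => u i = 1) ∧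
        ∀ c, ¬ bodyTrue cpos cneg (Finset.univ.filter fun i => u i = 1) c := by
  exact stmt7' hd pos neg cpos cneg ℓ₂ ℓ₃ hℓ₂ hℓ₃ u
end
end

section
/- (Proposition 5) Let P be a normal logic program over n atoms with m rules and (D, Q) its matricized form, let L₁, …, L_t enumerate all loops of P, let I be a model and u_I ∈ {0,1}^n its vectorized model. Define M = 1 − min₁(Q(1 − u_I^δ)), A_s = Σ_{i ∈ L_s}(1 − u_I(i)) + Σ_{j support rule for L_s} M(j) for s = 1,…,t, and J_LF(u_I) = Σ_{s=1}^t (1 − min₁(A_s)). Then J_LF(u_I) = 0 if and only if I satisfies the loop formula LF(L) for every loop L of P. -/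
open Finset Matrix

noncomputable section

/-- edge of the positive dependency graph `pdg(P)` -/
def pdgEdge {n m : ℕ} (hd : Fin m → Fin n) (pos : Fin m → Finset (Fin n))
    (a b : Fin n) : Prop :=
  ∃ j, hd j = a ∧ b ∈ pos j

/-- `L` is a loop of the program: a nonempty set of atoms such that between any two of
its atoms there are (nonempty) directed paths in `pdg(P)` in both directions, where a
singleton `L = {a}` requires the edge `(a,a)` -/
def isLoop {n m : ℕ} (hd : Fin m → Fin n) (pos : Fin m → Finset (Fin n))
    (L : Finset (Fin n)) : Prop :=
  L.Nonempty ∧ (∀ a₁ ∈ L, ∀ a₂ ∈ L, Relation.TransGen (pdgEdge hd pos) a₁ a₂) ∧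
    (∀ a, L = {a} → pdgEdge hd pos a a)

/-- rule `j` is a support rule for the loop `L` -/
def isSupportRule {n m : ℕ} (hd : Fin m → Fin n) (pos : Fin m → Finset (Fin n))
    (L : Finset (Fin n)) (j : Fin m) : Prop :=
  hd j ∈ L ∧ pos j ∩ L = ∅

instance {n m : ℕ} (hd : Fin m → Fin n) (pos : Fin m → Finset (Fin n))
    (L : Finset (Fin n)) : DecidablePred (isSupportRule hd pos L) := fun j =>
  inferInstanceAs (Decidable (hd j ∈ L ∧ pos j ∩ L = ∅))

/-- `I` satisfies the loop formula `LF(L)` -/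
def satLF {n m : ℕ} (hd : Fin m → Fin n) (pos neg : Fin m → Finset (Fin n))
    (I : Finset (Fin n)) (L : Finset (Fin n)) : Prop :=
  L ⊆ I → ∃ j, isSupportRule hd pos L j ∧ bodyTrue pos neg I j

/-- `M = 1 - min₁(Q(1 - u^δ))` : the (continuous) truth values of the rule bodies -/
def Mvec {n m : ℕ} (pos neg : Fin m → Finset (Fin n)) (u : Fin n → ℝ) : Fin m → ℝ :=
  fun j => 1 - min1 ((Qmat pos neg).mulVec fun x => 1 - dvec u x) j

/-- `A_L = Σ_{i ∈ L}(1 - u(i)) + Σ_{j support rule for L} M(j)` -/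
def Aval {n m : ℕ} (hd : Fin m → Fin n) (pos neg : Fin m → Finset (Fin n))
    (u : Fin n → ℝ) (L : Finset (Fin n)) : ℝ :=
  (∑ i ∈ L, (1 - u i)) +
    ∑ j ∈ Finset.univ.filter (isSupportRule hd pos L), Mvec pos neg u j

lemma Mvec_vecI {n m : ℕ} (pos neg : Fin m → Finset (Fin n)) (I : Finset (Fin n))
    (j : Fin m) :
    Mvec pos neg (vecI I) j = if bodyTrue pos neg I j then 1 else 0 := by
  have hS : ((Qmat pos neg).mulVec fun x => 1 - dvec (vecI I) x) j
      = (((pos j).filter (· ∉ I)).card + ((neg j).filter (· ∈ I)).card : ℕ) := by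
    simp only [Matrix.mulVec, dotProduct, Qmat, Matrix.of_apply, Fintype.sum_sum_type,
      Sum.elim_inl, Sum.elim_inr, dvec, vecI, boole_mul, Finset.sum_ite_mem,
      Finset.univ_inter]
    push_cast
    congr 1
    · rw [← Finset.sum_boole]
      apply Finset.sum_congr rfl; intro i _
      by_cases h : i ∈ I <;> simp [h]
    · rw [← Finset.sum_boole]
      apply Finset.sum_congr rfl; intro i _
      by_cases h : i ∈ I <;> simp [h]
  have hbody : bodyTrue pos neg I j ↔
      ((pos j).filter (· ∉ I)).card + ((neg j).filter (· ∈ I)).card = 0 := by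
    constructor
    · rintro ⟨h1, h2⟩
      rw [Nat.add_eq_zero]
      constructor <;> rw [Finset.card_eq_zero, Finset.filter_eq_empty_iff]
      · intro i hi; simp [h1 hi]
      · intro i hi hiI
        exact absurd h2 (Finset.nonempty_iff_ne_empty.mp ⟨i, Finset.mem_inter.mpr ⟨hi, hiI⟩⟩)
    · intro h
      rw [Nat.add_eq_zero] at h
      obtain ⟨h1, h2⟩ := h
      rw [Finset.card_eq_zero, Finset.filter_eq_empty_iff] at h1 h2
      refine ⟨fun i hi => by_contra fun hni => h1 hi hni, ?_⟩
      ext i; simp only [Finset.mem_inter, Finset.notMem_empty, iff_false, not_and]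
      exact fun hi hiI => h2 hi hiI
  unfold Mvec min1
  rw [hS]
  by_cases hb : bodyTrue pos neg I j
  · rw [hbody.mp hb]
    simp [hb]
  · have hpos : 1 ≤ ((pos j).filter (· ∉ I)).card + ((neg j).filter (· ∈ I)).card :=
      Nat.one_le_iff_ne_zero.mpr (fun h => hb (hbody.mpr h))
    have h1 : (1:ℝ) ≤ ((((pos j).filter (· ∉ I)).card + ((neg j).filter (· ∈ I)).card : ℕ) : ℝ) := by
      exact_mod_cast hpos
    rw [min_eq_right h1]
    simp [hb]

lemma Aval_vecI {n m : ℕ} (hd : Fin m → Fin n) (pos neg : Fin m → Finset (Fin n))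
    (I : Finset (Fin n)) (L : Finset (Fin n)) :
    Aval hd pos neg (vecI I) L
      = ((L.filter (· ∉ I)).card
        + (Finset.univ.filter (fun j => isSupportRule hd pos L j ∧
            bodyTrue pos neg I j)).card : ℕ) := by
  unfold Aval
  push_cast
  congr 1
  · rw [← Finset.sum_boole]
    apply Finset.sum_congr rfl; intro i _
    by_cases h : i ∈ I <;> simp [vecI, h]
  · rw [← Finset.sum_boole, Finset.sum_filter]
    apply Finset.sum_congr rfl; intro j _
    rw [Mvec_vecI]
    by_cases h1 : isSupportRule hd pos L j <;> by_cases h2 : bodyTrue pos neg I j <;>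
      simp [h1, h2]

lemma min_Aval_eq_one_iff {n m : ℕ} (hd : Fin m → Fin n) (pos neg : Fin m → Finset (Fin n))
    (I : Finset (Fin n)) (L : Finset (Fin n)) :
    min (Aval hd pos neg (vecI I) L) 1 = 1 ↔ satLF hd pos neg I L := by
  rw [Aval_vecI]
  set N := (L.filter (· ∉ I)).card
      + (Finset.univ.filter (fun j => isSupportRule hd pos L j ∧
          bodyTrue pos neg I j)).card with hN
  have hsat : satLF hd pos neg I L ↔ N ≠ 0 := by
    constructor
    · intro hs hN0
      rw [hN, Nat.add_eq_zero] at hN0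
      obtain ⟨h1, h2⟩ := hN0
      rw [Finset.card_eq_zero, Finset.filter_eq_empty_iff] at h1 h2
      have hsub : L ⊆ I := fun i hi => by_contra fun hni => h1 hi hni
      obtain ⟨j, hj1, hj2⟩ := hs hsub
      exact h2 (Finset.mem_univ j) ⟨hj1, hj2⟩
    · intro hne hsub
      by_cases h1 : (L.filter (· ∉ I)).card = 0
      · have h2 : 0 < (Finset.univ.filter (fun j => isSupportRule hd pos L j ∧
            bodyTrue pos neg I j)).card := Nat.pos_of_ne_zero (by omega)
        obtain ⟨j, hj⟩ := Finset.card_pos.mp h2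
        rw [Finset.mem_filter] at hj
        exact ⟨j, hj.2⟩
      · obtain ⟨i, hi⟩ := Finset.card_pos.mp (Nat.pos_of_ne_zero h1)
        rw [Finset.mem_filter] at hi
        exact absurd (hsub hi.1) hi.2
  rw [hsat]
  constructor
  · intro hmin hN0
    rw [hN0] at hmin
    norm_num at hmin
  · intro hne
    have : (1:ℝ) ≤ (N:ℝ) := by exact_mod_cast Nat.one_le_iff_ne_zero.mpr hne
    exact min_eq_right this

/-- Proposition 5: if `L₁, …, L_t` enumerates all loops of `P` then
`J_LF(u_I) = Σ_{s=1}^t (1 - min₁(A_s)) = 0` iff `I` satisfies `LF(L)` for every loop `L`. -/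
theorem stmt9 {n m : ℕ} (hd : Fin m → Fin n) (pos neg : Fin m → Finset (Fin n))
    (t : ℕ) (Ls : Fin t → Finset (Fin n)) (hinj : Function.Injective Ls)
    (henum : ∀ L, isLoop hd pos L ↔ ∃ s, Ls s = L) (I : Finset (Fin n)) :
    (∑ s, (1 - min (Aval hd pos neg (vecI I) (Ls s)) 1)) = 0 ↔
      ∀ L, isLoop hd pos L → satLF hd pos neg I L := by
  have hnonneg : ∀ s ∈ Finset.univ, 0 ≤ 1 - min (Aval hd pos neg (vecI I) (Ls s)) 1 :=
    fun s _ => by simp [min_le_right]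
  rw [Finset.sum_eq_zero_iff_of_nonneg hnonneg]
  constructor
  · intro h L hL
    obtain ⟨s, rfl⟩ := (henum L).mp hL
    have := h s (Finset.mem_univ s)
    have hm : min (Aval hd pos neg (vecI I) (Ls s)) 1 = 1 := by linarith
    exact (min_Aval_eq_one_iff hd pos neg I (Ls s)).mp hm
  · intro h s _
    have hL : isLoop hd pos (Ls s) := (henum (Ls s)).mpr ⟨s, rfl⟩
    have := (min_Aval_eq_one_iff hd pos neg I (Ls s)).mpr (h _ hL)
    linarith [this]
end
end
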